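/- (An interval with exactly two intermediate elements, Muchnik version.) Let f, g ∈ ω^ω be Turing incomparable. Consider the four mass problems A = {f, g}, M₁ = {f} ∪ C'(g), M₂ = {g} ∪ C'(f), and T = C'(f) ∪ C'(g). Then A <_w M₁ <_w T, A <_w M₂ <_w T, M₁ and M₂ are Muchnik incomparable, and every mass problem C with A ≤_w C ≤_w T satisfies C ≡_w A, C ≡_w M₁, C ≡_w M₂, or C ≡_w T. Hence the interval [A, T] in the Muchnik degrees is isomorphic to the four-element Boolean algebra. -/
import Mathlib


open Cardinal

namespace Muchnik

/-- Oracle partial recursiveness: `f` is partial recursive relative to the oracle `g`. -/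
inductive RecursiveIn (g : ℕ → ℕ) : (ℕ →. ℕ) → Prop
  | oracle : RecursiveIn g ↑g
  | zero : RecursiveIn g (pure 0)
  | succ : RecursiveIn g ↑Nat.succ
  | left : RecursiveIn g ↑fun n : ℕ => n.unpair.1
  | right : RecursiveIn g ↑fun n : ℕ => n.unpair.2
  | pair {f h} : RecursiveIn g f → RecursiveIn g h →
      RecursiveIn g fun n => Nat.pair <$> f n <*> h n
  | comp {f h} : RecursiveIn g f → RecursiveIn g h →
      RecursiveIn g fun n => h n >>= f
  | prec {f h} : RecursiveIn g f → RecursiveIn g h →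
      RecursiveIn g (Nat.unpaired fun a n =>
        n.rec (f a) fun y IH => do let i ← IH; h (Nat.pair a (Nat.pair y i)))
  | rfind {f} : RecursiveIn g f →
      RecursiveIn g fun a => Nat.rfind fun n => (fun m => m = 0) <$> f (Nat.pair a n)

/-- Turing reducibility `f ≤_T g` for elements of Baire space. -/
def TuringLe (f g : ℕ → ℕ) : Prop := RecursiveIn g ↑f

/-- Strict Turing reducibility `f <_T g`. -/
def TuringLt (f g : ℕ → ℕ) : Prop := TuringLe f g ∧ ¬ TuringLe g f

/-- Turing equivalence `f ≡_T g`. -/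
def TuringEquiv (f g : ℕ → ℕ) : Prop := TuringLe f g ∧ TuringLe g f

/-- Turing incomparability `f |_T g`. -/
def TuringIncomp (f g : ℕ → ℕ) : Prop := ¬ TuringLe f g ∧ ¬ TuringLe g f

/-- Muchnik reducibility `A ≤_w B` between mass problems. -/
def MuchnikLe (A B : Set (ℕ → ℕ)) : Prop := ∀ f ∈ B, ∃ g ∈ A, TuringLe g f

/-- Strict Muchnik reducibility `A <_w B`. -/
def MuchnikLt (A B : Set (ℕ → ℕ)) : Prop := MuchnikLe A B ∧ ¬ MuchnikLe B A

/-- Muchnik equivalence `A ≡_w B`. -/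
def MuchnikEquiv (A B : Set (ℕ → ℕ)) : Prop := MuchnikLe A B ∧ MuchnikLe B A

/-- The strict Turing upper cone `C'(f) = {g : f <_T g}`. -/
def cone (f : ℕ → ℕ) : Set (ℕ → ℕ) := {g | TuringLt f g}

/-- The recursive join `f ⊕ g`: `(f ⊕ g)(2x) = f(x)` and `(f ⊕ g)(2x+1) = g(x)`. -/
def join (f g : ℕ → ℕ) : ℕ → ℕ := fun n => if n % 2 = 0 then f (n / 2) else g (n / 2)

/-- The join `A + B` of mass problems. -/
def joinSet (A B : Set (ℕ → ℕ)) : Set (ℕ → ℕ) := {h | ∃ f ∈ A, ∃ g ∈ B, h = join f g}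

/-- Identification of `2^ω` with a subset of Baire space. -/
def ofBool (X : ℕ → Bool) : ℕ → ℕ := fun n => if X n then 1 else 0


theorem recIn_trans {h g : ℕ → ℕ} {f : ℕ →. ℕ}
    (hf : RecursiveIn g f) (hg : RecursiveIn h ↑g) : RecursiveIn h f := by
  induction hf with
  | oracle => exact hg
  | zero => exact .zero
  | succ => exact .succ
  | left => exact .left
  | right => exact .right
  | pair _ _ ih1 ih2 => exact .pair ih1 ih2
  | comp _ _ ih1 ih2 => exact .comp ih1 ih2
  | prec _ _ ih1 ih2 => exact .prec ih1 ih2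
  | rfind _ ih => exact .rfind ih

theorem TuringLe.refl (f : ℕ → ℕ) : TuringLe f f := RecursiveIn.oracle

theorem TuringLe.trans {f g h : ℕ → ℕ} (h1 : TuringLe f g) (h2 : TuringLe g h) :
    TuringLe f h := recIn_trans h1 h2

/-- (An interval with exactly two intermediate elements, Muchnik version.) For Turing
incomparable `f, g`, with `A = {f, g}`, `M₁ = {f} ∪ C'(g)`, `M₂ = {g} ∪ C'(f)`, and
`T = C'(f) ∪ C'(g)`: `A <_w M₁ <_w T`, `A <_w M₂ <_w T`, `M₁` and `M₂` are Muchnik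
incomparable, and every `C` with `A ≤_w C ≤_w T` is equivalent to one of `A, M₁, M₂, T`;
hence the interval `[A, T]` is isomorphic to the four-element Boolean algebra. -/
theorem interval_two_intermediate (f g : ℕ → ℕ) (hfg : TuringIncomp f g) :
    MuchnikLt {f, g} ({f} ∪ cone g) ∧ MuchnikLt ({f} ∪ cone g) (cone f ∪ cone g) ∧
    MuchnikLt {f, g} ({g} ∪ cone f) ∧ MuchnikLt ({g} ∪ cone f) (cone f ∪ cone g) ∧
    ¬ MuchnikLe ({f} ∪ cone g) ({g} ∪ cone f) ∧
    ¬ MuchnikLe ({g} ∪ cone f) ({f} ∪ cone g) ∧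
    (∀ C : Set (ℕ → ℕ), MuchnikLe {f, g} C → MuchnikLe C (cone f ∪ cone g) →
      MuchnikEquiv C {f, g} ∨ MuchnikEquiv C ({f} ∪ cone g) ∨
        MuchnikEquiv C ({g} ∪ cone f) ∨ MuchnikEquiv C (cone f ∪ cone g)) := by
  obtain ⟨hgf, hfg'⟩ := hfg
  have hAM1 : MuchnikLe {f, g} ({f} ∪ cone g) := by
    rintro h (rfl | ⟨hle, _⟩)
    · exact ⟨h, Or.inl rfl, TuringLe.refl h⟩
    · exact ⟨g, Or.inr rfl, hle⟩
  have hAM2 : MuchnikLe {f, g} ({g} ∪ cone f) := by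
    rintro h (rfl | ⟨hle, _⟩)
    · exact ⟨h, Or.inr rfl, TuringLe.refl h⟩
    · exact ⟨f, Or.inl rfl, hle⟩
  have hM1T : MuchnikLe ({f} ∪ cone g) (cone f ∪ cone g) := by
    rintro h (⟨hle, _⟩ | hc)
    · exact ⟨f, Or.inl rfl, hle⟩
    · exact ⟨h, Or.inr hc, TuringLe.refl h⟩
  have hM2T : MuchnikLe ({g} ∪ cone f) (cone f ∪ cone g) := by
    rintro h (hc | ⟨hle, _⟩)
    · exact ⟨h, Or.inr hc, TuringLe.refl h⟩
    · exact ⟨g, Or.inl rfl, hle⟩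
  have hnM1A : ¬ MuchnikLe ({f} ∪ cone g) {f, g} := by
    intro hle
    obtain ⟨k, hk, hkg⟩ := hle g (Or.inr rfl)
    rcases hk with rfl | ⟨_, hnk⟩
    · exact hgf hkg
    · exact hnk hkg
  have hnM2A : ¬ MuchnikLe ({g} ∪ cone f) {f, g} := by
    intro hle
    obtain ⟨k, hk, hkf⟩ := hle f (Or.inl rfl)
    rcases hk with rfl | ⟨_, hnk⟩
    · exact hfg' hkf
    · exact hnk hkf
  have hnTM1 : ¬ MuchnikLe (cone f ∪ cone g) ({f} ∪ cone g) := by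
    intro hle
    obtain ⟨k, hk, hkf⟩ := hle f (Or.inl rfl)
    rcases hk with ⟨_, hnk⟩ | ⟨hgk, _⟩
    · exact hnk hkf
    · exact hfg' (hgk.trans hkf)
  have hnTM2 : ¬ MuchnikLe (cone f ∪ cone g) ({g} ∪ cone f) := by
    intro hle
    obtain ⟨k, hk, hkg⟩ := hle g (Or.inl rfl)
    rcases hk with ⟨hfk, _⟩ | ⟨_, hnk⟩
    · exact hgf (hfk.trans hkg)
    · exact hnk hkg
  have hnM21 : ¬ MuchnikLe ({g} ∪ cone f) ({f} ∪ cone g) := by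
    intro hle
    obtain ⟨k, hk, hkf⟩ := hle f (Or.inl rfl)
    rcases hk with rfl | ⟨_, hnk⟩
    · exact hfg' hkf
    · exact hnk hkf
  have hnM12 : ¬ MuchnikLe ({f} ∪ cone g) ({g} ∪ cone f) := by
    intro hle
    obtain ⟨k, hk, hkg⟩ := hle g (Or.inl rfl)
    rcases hk with rfl | ⟨_, hnk⟩
    · exact hgf hkg
    · exact hnk hkg
  refine ⟨⟨hAM1, hnM1A⟩, ⟨hM1T, hnTM1⟩, ⟨hAM2, hnM2A⟩, ⟨hM2T, hnTM2⟩, hnM12, hnM21, ?_⟩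
  intro C hAC hCT
  by_cases Qf : ∃ c ∈ C, TuringLe c f
  · by_cases Qg : ∃ c ∈ C, TuringLe c g
    · left
      refine ⟨?_, hAC⟩
      rintro h (rfl | rfl)
      · exact Qf
      · exact Qg
    · right; left
      constructor
      · rintro h (rfl | hc)
        · exact Qf
        · exact hCT h (Or.inr hc)
      · intro c hc
        obtain ⟨a, ha, hac⟩ := hAC c hc
        rcases ha with rfl | rfl
        · exact ⟨a, Or.inl rfl, hac⟩
        · exact ⟨c, Or.inr ⟨hac, fun hcg => Qg ⟨c, hc, hcg⟩⟩, TuringLe.refl c⟩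
  · by_cases Qg : ∃ c ∈ C, TuringLe c g
    · right; right; left
      constructor
      · rintro h (rfl | hc)
        · exact Qg
        · exact hCT h (Or.inl hc)
      · intro c hc
        obtain ⟨a, ha, hac⟩ := hAC c hc
        rcases ha with rfl | rfl
        · exact ⟨c, Or.inr ⟨hac, fun hcf => Qf ⟨c, hc, hcf⟩⟩, TuringLe.refl c⟩
        · exact ⟨a, Or.inl rfl, hac⟩
    · right; right; right
      refine ⟨hCT, ?_⟩
      intro c hc
      obtain ⟨a, ha, hac⟩ := hAC c hc
      rcases ha with rfl | rfl
      · exact ⟨c, Or.inl ⟨hac, fun hcf => Qf ⟨c, hc, hcf⟩⟩, TuringLe.refl c⟩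
      · exact ⟨c, Or.inr ⟨hac, fun hcg => Qg ⟨c, hc, hcg⟩⟩, TuringLe.refl c⟩

end Muchnik
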